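/- Let f ∈ (0,1) and κ, γ₁, γ₂, γ₃ > 0, and let u* ∈ [0,1]⁴ be a steady state of the ZIP regulatory system. Then the determinant of the Jacobian matrix J(u*) satisfies det J(u*) = (1/(u₃*·(1+κ·u₃*²)))·( γ₃·κ²·u₃*⁶ + (κ·f·γ₂ + 2γ₃ + κ)·κ·u₃*⁴ + (2κ + γ₃)·u₃*² + 1 + (2·f·γ₂·(1+γ₁)·u₃* − f·γ₂)·κ·u₃*² ). -/

import Mathlib

/-- The ZIP regulatory vector field on ℝ⁴ (components indexed by `Fin 4`). -/
noncomputable def zipField (κ γ₁ γ₂ γ₃ f : ℝ) (u : Fin 4 → ℝ) : Fin 4 → ℝ :=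
  ![κ * (u 2) ^ 2 * (1 - u 0) - u 0,
    u 0 * f - u 1,
    1 - γ₁ * u 2 * u 3 - u 2,
    γ₂ * u 1 - γ₃ * u 2 * u 3 - (1 + γ₂ * u 1) * u 3]

/-- The Jacobian matrix of the ZIP regulatory vector field at a point u. -/
noncomputable def zipJacobian (κ γ₁ γ₂ γ₃ f : ℝ) (u : Fin 4 → ℝ) :
    Matrix (Fin 4) (Fin 4) ℝ :=
  !![-(κ * (u 2) ^ 2) - 1, 0, 2 * κ * u 2 * (1 - u 0), 0;
     f, -1, 0, 0;
     0, 0, -(γ₁ * u 3) - 1, -(γ₁ * u 2);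
     0, γ₂ * (1 - u 3), -(γ₃ * u 3), -(γ₃ * u 2) - 1 - γ₂ * u 1]

/-!
Writing `c = u 2` (the paper's u₃*; coordinates are indexed from `0`), cofactor expansion gives
`det J(u) = (1 + κc²)((1 + γ₁u₃)(1 + γ₂u₁) + γ₃c) + 2fγ₂κc²(1 - u₀)γ₁(1 - u₃)` at every point.
At a steady state `1 - u₀ = 1/(1 + κc²)`, `u₁ = f u₀` and `1 + γ₁u₃ = 1/c`, which turns this into
the stated rational function of `c` alone.
-/

-- `γ₁ * u 3` is kept together so that the steady-state value of `γ₁ u₃` can be substituted.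
theorem zipJacobian_det (κ γ₁ γ₂ γ₃ f : ℝ) (u : Fin 4 → ℝ) :
    (zipJacobian κ γ₁ γ₂ γ₃ f u).det =
      (1 + κ * u 2 ^ 2) * ((1 + γ₁ * u 3) * (1 + γ₂ * u 1) + γ₃ * u 2) +
        2 * f * γ₂ * κ * u 2 ^ 2 * (1 - u 0) * (γ₁ - γ₁ * u 3) := by
  simp [zipJacobian, Matrix.det_succ_row_zero, Fin.sum_univ_succ, Fin.succAbove]
  ring

theorem zipField_eq_zero_iff (κ γ₁ γ₂ γ₃ f : ℝ) (u : Fin 4 → ℝ) :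
    zipField κ γ₁ γ₂ γ₃ f u = 0 ↔
      u 0 * (1 + κ * u 2 ^ 2) = κ * u 2 ^ 2 ∧ u 1 = f * u 0 ∧ γ₁ * u 2 * u 3 = 1 - u 2 ∧
        γ₂ * u 1 = (γ₃ * u 2 + 1 + γ₂ * u 1) * u 3 := by
  simp only [zipField, funext_iff, Pi.zero_apply, Fin.forall_fin_succ, Matrix.cons_val_zero,
    Matrix.cons_val_succ, Matrix.cons_val_fin_one, forall_const]
  constructor <;> rintro ⟨h0, h1, h2, h3⟩ <;> exact ⟨by linarith, by linarith, by linarith, by linarith⟩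

theorem zip_jacobian_det_formula_general
    (κ γ₁ γ₂ γ₃ f : ℝ)
    (u : Fin 4 → ℝ)
    (hsteady : zipField κ γ₁ γ₂ γ₃ f u = 0) :
    (zipJacobian κ γ₁ γ₂ γ₃ f u).det =
      (1 / (u 2 * (1 + κ * (u 2) ^ 2))) *
        (γ₃ * κ ^ 2 * (u 2) ^ 6 + (κ * f * γ₂ + 2 * γ₃ + κ) * κ * (u 2) ^ 4 +
          (2 * κ + γ₃) * (u 2) ^ 2 + 1 +
          (2 * f * γ₂ * (1 + γ₁) * u 2 - f * γ₂) * κ * (u 2) ^ 2) := by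
  obtain ⟨hu0, hu1, hu3, -⟩ := (zipField_eq_zero_iff κ γ₁ γ₂ γ₃ f u).1 hsteady
  have hu2 : u 2 ≠ 0 := by
    rintro h
    simp [h] at hu3
  have hden : 1 + κ * u 2 ^ 2 ≠ 0 := by
    intro h
    have hκu2 : κ * u 2 ^ 2 = 0 := by rw [← hu0, h, mul_zero]
    linarith
  have hw : γ₁ * u 3 = (1 - u 2) / u 2 := by
    rw [eq_div_iff hu2]
    linear_combination hu3
  rw [zipJacobian_det, hw, hu1, eq_div_of_mul_eq hden hu0]
  field_simp
  ring

/-- the determinant of the Jacobian at a steady state in [0,1]⁴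
has the explicit form given in terms of u₃*. -/
theorem zip_jacobian_det_formula
    (κ γ₁ γ₂ γ₃ f : ℝ) (hκ : 0 < κ) (hγ₁ : 0 < γ₁) (hγ₂ : 0 < γ₂) (hγ₃ : 0 < γ₃)
    (hf : f ∈ Set.Ioo (0 : ℝ) 1)
    (u : Fin 4 → ℝ) (hu : ∀ i, u i ∈ Set.Icc (0 : ℝ) 1)
    (hsteady : zipField κ γ₁ γ₂ γ₃ f u = 0) :
    (zipJacobian κ γ₁ γ₂ γ₃ f u).det =
      (1 / (u 2 * (1 + κ * (u 2) ^ 2))) *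
        (γ₃ * κ ^ 2 * (u 2) ^ 6 + (κ * f * γ₂ + 2 * γ₃ + κ) * κ * (u 2) ^ 4 +
          (2 * κ + γ₃) * (u 2) ^ 2 + 1 +
          (2 * f * γ₂ * (1 + γ₁) * u 2 - f * γ₂) * κ * (u 2) ^ 2) :=
  zip_jacobian_det_formula_general κ γ₁ γ₂ γ₃ f u hsteady
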